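/- arXiv:2406.18017 — 2 statements merged into one kernel-verified Lean document; each statement's English description precedes it below -/
import Mathlib

section
/- Let C1, ..., Cn be {0,1}-valued random variables such that for every i ≠ α and every subset J ⊆ {1,...,n}\{i,α}, P(Cα = 1 | Ci = 1, Cj = 0 for j ∈ J) ≥ P(Cα = 1 | Cj = 0 for j ∈ J) whenever both conditional probabilities are defined. Then for all i and all J ⊆ {1,...,n}\{i} (with the conditioning event having positive probability), P(Ci = 1 | Cj = 0 for j ∈ J) ≤ P(Ci = 1). -/
open MeasureTheory

theorem stmt7 {Ω : Type*} [MeasurableSpace Ω] (μ : Measure Ω) [IsProbabilityMeasure μ]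
    (n : ℕ) (C : Fin n → Ω → ℝ)
    (h01 : ∀ i ω, C i ω = 0 ∨ C i ω = 1) (hmeas : ∀ i, Measurable (C i))
    (hyp : ∀ (a i : Fin n), a ≠ i → ∀ J : Finset (Fin n), i ∉ J → a ∉ J →
      μ ({ω | C i ω = 1} ∩ ⋂ j ∈ J, {ω | C j ω = 0}) ≠ 0 →
      μ (⋂ j ∈ J, {ω | C j ω = 0}) ≠ 0 →
      (μ ({ω | C a ω = 1} ∩ ⋂ j ∈ J, {ω | C j ω = 0})).toReal /
          (μ (⋂ j ∈ J, {ω | C j ω = 0})).toReal ≤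
        (μ ({ω | C a ω = 1} ∩ ({ω | C i ω = 1} ∩ ⋂ j ∈ J, {ω | C j ω = 0}))).toReal /
          (μ ({ω | C i ω = 1} ∩ ⋂ j ∈ J, {ω | C j ω = 0})).toReal) :
    ∀ (i : Fin n) (J : Finset (Fin n)), i ∉ J →
      μ (⋂ j ∈ J, {ω | C j ω = 0}) ≠ 0 →
      (μ ({ω | C i ω = 1} ∩ ⋂ j ∈ J, {ω | C j ω = 0})).toReal /
          (μ (⋂ j ∈ J, {ω | C j ω = 0})).toReal ≤ (μ {ω | C i ω = 1}).toReal := by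
  classical
  intro i J
  induction J using Finset.induction_on with
  | empty =>
    intro _ _
    simp
  | @insert a J' haJ' ih =>
    intro hi hne
    have hia : i ≠ a := fun h => hi (h ▸ Finset.mem_insert_self a J')
    have hiJ' : i ∉ J' := fun h => hi (Finset.mem_insert_of_mem h)
    set A := {ω | C i ω = 1} with hA
    set T := {ω | C a ω = 1} with hT
    set E := ⋂ j ∈ J', {ω | C j ω = 0} with hE
    have hFeq : (⋂ j ∈ insert a J', {ω | C j ω = 0}) = {ω | C a ω = 0} ∩ E := by
      simp [Set.biInter_insert, hE]
    have hcompl : {ω | C a ω = 0} = Tᶜ := by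
      ext ω
      simp only [Set.mem_setOf_eq, Set.mem_compl_iff, hT]
      constructor
      · intro h h1; rw [h] at h1; norm_num at h1
      · intro h; rcases h01 a ω with h0 | h1
        · exact h0
        · exact absurd h1 h
    have hTm : MeasurableSet T := by
      have : T = (C a) ⁻¹' {1} := by ext ω; simp [hT]
      rw [this]; exact (hmeas a) (measurableSet_singleton 1)
    -- splitting lemmas
    have hsplitE : μ (T ∩ E) + μ ({ω | C a ω = 0} ∩ E) = μ E := by
      rw [hcompl]
      have := measure_inter_add_diff (μ := μ) E hTm
      rw [Set.inter_comm] at this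
      rw [show Tᶜ ∩ E = E \ T by rw [Set.diff_eq, Set.inter_comm]]
      exact this
    have hsplitAE : μ (A ∩ (T ∩ E)) + μ (A ∩ ({ω | C a ω = 0} ∩ E)) = μ (A ∩ E) := by
      rw [hcompl]
      have := measure_inter_add_diff (μ := μ) (A ∩ E) hTm
      rw [show A ∩ E ∩ T = A ∩ (T ∩ E) by ac_rfl,
         show (A ∩ E) \ T = A ∩ (Tᶜ ∩ E) by
           rw [Set.diff_eq]; ac_rfl] at this
      exact this
    rw [hFeq] at hne ⊢
    -- real versions
    have fin : ∀ s : Set Ω, μ s ≠ ⊤ := fun s => measure_ne_top μ s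
    set x := (μ (A ∩ ({ω | C a ω = 0} ∩ E))).toReal with hx
    set y := (μ ({ω | C a ω = 0} ∩ E)).toReal with hy
    set u := (μ (A ∩ (T ∩ E))).toReal with hu
    set v := (μ (T ∩ E)).toReal with hv
    set s := (μ (A ∩ E)).toReal with hs
    set t := (μ E).toReal with ht
    have hyt : v + y = t := by
      rw [hv, hy, ht, ← ENNReal.toReal_add (fin _) (fin _), hsplitE]
    have hxs : u + x = s := by
      rw [hu, hx, hs, ← ENNReal.toReal_add (fin _) (fin _), hsplitAE]
    have hypos : 0 < y := ENNReal.toReal_pos hne (fin _)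
    have hEne : μ E ≠ 0 := by
      intro h0
      have : μ ({ω | C a ω = 0} ∩ E) = 0 :=
        measure_mono_null Set.inter_subset_right h0
      exact hne this
    have htpos : 0 < t := ENNReal.toReal_pos hEne (fin _)
    have hih : s / t ≤ (μ A).toReal := ih hiJ' hEne
    have key : x / y ≤ s / t := by
      by_cases hTE : μ (T ∩ E) = 0
      · have hu0 : u = 0 := by
          rw [hu, measure_mono_null Set.inter_subset_right hTE]; simp
        have hv0 : v = 0 := by rw [hv, hTE]; simp
        rw [hu0, zero_add] at hxs
        rw [hv0, zero_add] at hyt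
        rw [hxs, hyt]
      · have hvpos : 0 < v := ENNReal.toReal_pos hTE (fin _)
        have hh := hyp i a hia J' haJ' hiJ' hTE hEne
        rw [← hA, ← hT, ← hE, ← hs, ← ht, ← hu, ← hv] at hh
        -- hh : s / t ≤ u / v
        rw [div_le_div_iff₀ htpos hvpos] at hh
        rw [div_le_div_iff₀ hypos htpos]
        have h1 : x * t = s * t - u * t := by
          rw [show x = s - u from by linarith]; ring
        have h2 : s * y = s * t - s * v := by
          rw [show y = t - v from by linarith]; ring
        linarith
    exact key.trans hih
end

section
/- Consider the CS-BATS construction: given a base graph with m rows g_0, ..., g_{m-1} ∈ {0,1}^K, the i-th check node row is t_i = g_{i mod m} cyclically right-shifted by ⌊i/m⌋ positions. Fix a variable node index k ∈ {0,...,K-1}. Then as the number of check nodes N → ∞, the fraction of check nodes t_0, ..., t_{N-1} whose k-th entry is 1 converges to (∑_{j=0}^{m-1} deg(g_j)) / (mK), independent of k. -/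
open Filter

/-- Hamming weight (degree) of a binary row over `ZMod K`. -/
def rowDeg {K : ℕ} [NeZero K] (v : ZMod K → Bool) : ℕ :=
  (Finset.univ.filter (fun x => v x = true)).card

/-- The `i`-th check-node row of the CS-BATS code: row `i mod m` of the base
graph cyclically right-shifted by `⌊i / m⌋`. -/
def csRow {m K : ℕ} (hm : 0 < m) (g : Fin m → ZMod K → Bool) (i : ℕ) :
    ZMod K → Bool :=
  fun k => g ⟨i % m, Nat.mod_lt i hm⟩ (k - ((i / m : ℕ) : ZMod K))

/-!
The event `t_i(k) = 1` depends on `i` only modulo `mK`, and on `i < mK` the map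
`i ↦ (i mod m, k - ⌊i/m⌋)` is a bijection onto `Fin m × ZMod K`, so each period contains
exactly `∑ⱼ deg gⱼ` hits. A periodic count differs from its linear trend by at most one period.
-/

open Function Filter Topology Finset

theorem tendsto_div_of_abs_sub_mul_le {u : ℕ → ℝ} {l C : ℝ} (h : ∀ N : ℕ, |u N - N * l| ≤ C) :
    Tendsto (fun N : ℕ ↦ u N / N) atTop (𝓝 l) := by
  rw [← tendsto_sub_nhds_zero_iff]
  refine squeeze_zero_norm' ?_ (tendsto_const_div_atTop_nhds_zero_nat C)
  filter_upwards [eventually_gt_atTop 0] with N hN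
  have hN : (0 : ℝ) < N := mod_cast hN
  calc ‖u N / N - l‖ = |u N - N * l| / N := by
        rw [Real.norm_eq_abs, div_sub' hN.ne', abs_div, abs_of_pos hN, mul_comm]
    _ ≤ C / N := by gcongr; exact h N

namespace Nat

variable {p : ℕ → Prop} [DecidablePred p] {a : ℕ}

theorem count_mul_add_of_periodic (hp : Periodic p a) (q r : ℕ) :
    count p (a * q + r) = q * count p a + count p r := by
  have shift : ∀ q, (fun k ↦ p (a * q + k)) = p := fun q ↦ funext fun k ↦ by
    simpa [add_comm, mul_comm] using hp.nat_mul q k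
  have count_mul : count p (a * q) = q * count p a := by
    induction q with
    | zero => simp
    | succ q ih => simp only [Nat.mul_succ, count_add, ih, shift, Nat.succ_mul]
  simp only [count_add, count_mul, shift]

theorem abs_count_sub_mul_div_le_of_periodic (hp : Periodic p a) (ha : 0 < a) (N : ℕ) :
    |(count p N : ℝ) - N * (count p a / a)| ≤ a := by
  have hr : N % a < a := Nat.mod_lt N ha
  have hcount : count p N = N / a * count p a + count p (N % a) := by
    conv_lhs => rw [← Nat.div_add_mod N a]
    exact count_mul_add_of_periodic hp _ _
  have hN : (N : ℝ) = a * (N / a : ℕ) + (N % a : ℕ) := mod_cast (Nat.div_add_mod N a).symm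
  have key : (count p N : ℝ) - N * (count p a / a)
      = count p (N % a) - (N % a : ℕ) * (count p a / a) := by
    rw [hcount, hN]
    push_cast
    field_simp
    ring
  have hc : (count p a : ℝ) / a ≤ 1 := div_le_one_of_le₀ (mod_cast count_le p) (by positivity)
  rw [key]
  refine abs_sub_le_of_nonneg_of_le (by positivity) ?_ (by positivity) ?_
  · exact_mod_cast (count_le p).trans hr.le
  · calc ((N % a : ℕ) : ℝ) * (count p a / a) ≤ (N % a : ℕ) :=
          mul_le_of_le_one_right (by positivity) hc
      _ ≤ a := mod_cast hr.le

theorem tendsto_count_div_of_periodic (hp : Periodic p a) (ha : 0 < a) :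
    Tendsto (fun N : ℕ ↦ (count p N : ℝ) / N) atTop (𝓝 (count p a / a)) :=
  tendsto_div_of_abs_sub_mul_le (abs_count_sub_mul_div_le_of_periodic hp ha)

end Nat

section CSBATS

variable {m K : ℕ} (hm : 0 < m) (g : Fin m → ZMod K → Bool)

theorem csRow_periodic : Periodic (csRow hm g) (m * K) := fun i ↦ by
  funext x
  simp [csRow, Nat.add_mul_mod_self_left, Nat.add_mul_div_left _ _ hm]

theorem count_csRow_eq_sum_rowDeg [NeZero K] (k : ZMod K) :
    Nat.count (fun i ↦ csRow hm g i k = true) (m * K) = ∑ j, rowDeg (g j) := by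
  have hdivmod : ∀ (j : Fin m) (b : ℕ), (j + m * b) % m = j ∧ (j + m * b) / m = b := fun j b ↦
    ⟨by simp [Nat.add_mul_mod_self_left, Nat.mod_eq_of_lt j.isLt],
     by simp [Nat.add_mul_div_left _ _ hm, Nat.div_eq_of_lt j.isLt]⟩
  have hcard : Nat.count (fun i ↦ csRow hm g i k = true) (m * K)
      = #{q : Fin m × ZMod K | g q.1 q.2 = true} := by
    rw [Nat.count_eq_card_filter_range]
    refine Finset.card_nbij' (fun i ↦ (⟨i % m, Nat.mod_lt i hm⟩, k - (i / m : ℕ)))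
      (fun q ↦ q.1 + m * (k - q.2).val) ?_ ?_ ?_ ?_
    · intro i hi
      simp only [coe_filter, Set.mem_ofPred_eq, mem_univ, true_and, mem_range] at hi ⊢
      exact hi.2
    · intro q hq
      simp only [coe_filter, Set.mem_ofPred_eq, mem_univ, true_and, mem_range] at hq ⊢
      obtain ⟨hmod, hdiv⟩ := hdivmod q.1 (k - q.2).val
      refine ⟨?_, ?_⟩
      · calc (q.1 : ℕ) + m * (k - q.2).val < m * ((k - q.2).val + 1) := by
              rw [Nat.mul_succ]; omega
          _ ≤ m * K := Nat.mul_le_mul_left m (ZMod.val_lt _)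
      · simpa [csRow, hmod, hdiv] using hq
    · intro i hi
      simp only [coe_filter, Set.mem_ofPred_eq, mem_range] at hi
      have : i / m < K := Nat.div_lt_of_lt_mul hi.1
      simp [ZMod.val_natCast, Nat.mod_eq_of_lt this, Nat.mod_add_div]
    · intro q hq
      obtain ⟨hmod, hdiv⟩ := hdivmod q.1 (k - q.2).val
      ext <;> simp [hmod, hdiv]
  rw [hcard, Finset.card_filter, Fintype.sum_prod_type]
  simp only [rowDeg, Finset.card_filter]

end CSBATS

theorem stmt13 (m K : ℕ) (hm : 0 < m) [NeZero K] (g : Fin m → ZMod K → Bool)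
    (k : ZMod K) :
    Tendsto
      (fun N : ℕ =>
        (((Finset.range N).filter (fun i => csRow hm g i k = true)).card : ℝ) / N)
      atTop
      (nhds ((∑ j, (rowDeg (g j) : ℝ)) / (m * K))) := by
  have hper : Periodic (fun i ↦ csRow hm g i k = true) (m * K) := fun i ↦ by
    simp only [csRow_periodic hm g i]
  have hlim := Nat.tendsto_count_div_of_periodic hper (Nat.mul_pos hm (NeZero.pos K))
  rw [count_csRow_eq_sum_rowDeg] at hlim
  simp only [Nat.count_eq_card_filter_range] at hlim
  exact_mod_cast hlim
end
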